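/- Let χ be a primitive Dirichlet character of conductor F. Then as k → ∞ through positive integers with χ(−1) = (−1)^k, the ratio |L(χ,1−k)| / ( 2·e^{−1/2}·(kF/(2πe))^{k−1/2} ) tends to 1. -/

import Mathlib

/-!
The functional equation of the primitive character `χ` expresses `L(χ, 1-k)` through
`Γ(k) = (k-1)!`, the Gauss sum `τ(χ)` and `L(χ̄, k)`, with the phase factor
`χ(-1) i^k + (-i)^k`; under the parity condition `χ(-1) = (-1)^k` its two terms coincide, so it
has absolute value `2`. With `|τ(χ)| = √F` this gives
`|L(χ, 1-k)| = 2 F^(k-1/2) (2π)^(-k) (k-1)! |L(χ̄, k)|`. Divided by the normalising factor,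
everything except `|L(χ̄, k)| → 1` is exactly `stirlingSeq k / √π`, which tends to `1` by
Stirling's formula.
-/

open scoped Classical Topology

open Filter

section

open Complex ZMod
open scoped Real

lemma ZMod.LFunction_const_mul {N : ℕ} [NeZero N] (a : ℂ) (Φ : ZMod N → ℂ) (s : ℂ) :
    LFunction (fun j ↦ a * Φ j) s = a * LFunction Φ s := by
  simp only [LFunction, Finset.mul_sum]
  exact Finset.sum_congr rfl fun _ _ ↦ by ring

namespace DirichletCharacter

variable {N : ℕ} [NeZero N]

lemma starRingEnd_gaussSum (χ : DirichletCharacter ℂ N) :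
    starRingEnd ℂ (gaussSum χ stdAddChar) = ∑ j, stdAddChar j * χ⁻¹ (-j) := by
  rw [gaussSum, map_sum]
  refine Fintype.sum_equiv (Equiv.neg _) _ _ fun j ↦ ?_
  rw [map_mul, mul_comm, Equiv.neg_apply, neg_neg, ← MulChar.star_apply', stdAddChar_apply,
    stdAddChar_apply, AddChar.map_neg_eq_inv, Circle.coe_inv_eq_conj]
  rfl

lemma IsPrimitive.gaussSum_mul_starRingEnd {χ : DirichletCharacter ℂ N} (hχ : χ.IsPrimitive) :
    gaussSum χ stdAddChar * starRingEnd ℂ (gaussSum χ stdAddChar) = N := by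
  have h := congrFun (dft_dft (χ : ZMod N → ℂ)) (-1)
  simp only [neg_neg, map_one, smul_eq_mul, mul_one, dft_apply,
    hχ.fourierTransform_eq_inv_mul_gaussSum, mul_neg_one, neg_neg, ← mul_assoc] at h
  rw [starRingEnd_gaussSum, mul_comm, ← h, Finset.sum_mul]

lemma IsPrimitive.norm_gaussSum {χ : DirichletCharacter ℂ N} (hχ : χ.IsPrimitive) :
    ‖gaussSum χ stdAddChar‖ = √N := by
  have h := hχ.gaussSum_mul_starRingEnd
  rw [mul_conj, ← ofReal_natCast, ofReal_inj] at h
  rw [norm_def, h]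

lemma IsPrimitive.LFunction_one_sub {χ : DirichletCharacter ℂ N} (hχ : χ.IsPrimitive) {s : ℂ}
    (hs : ∀ n : ℕ, s ≠ -n) (hs' : χ 0 = 0 ∨ s ≠ 1) :
    χ.LFunction (1 - s) = N ^ (s - 1) * (2 * π) ^ (-s) * Gamma s *
      (χ⁻¹ (-1) * cexp (π * I * s / 2) + cexp (-π * I * s / 2)) *
      gaussSum χ stdAddChar * χ⁻¹.LFunction s := by
  have hdft : 𝓕 χ = fun j ↦ (χ⁻¹ (-1) * gaussSum χ stdAddChar) * χ⁻¹ j := by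
    ext j
    rw [hχ.fourierTransform_eq_inv_mul_gaussSum, ← neg_one_mul j, map_mul]
    ring
  have hdft_neg : 𝓕 (fun j ↦ χ (-j)) = fun j ↦ gaussSum χ stdAddChar * χ⁻¹ j := by
    ext j
    have hsq : χ⁻¹ (-1) * χ⁻¹ (-1) = 1 := by rw [← map_mul, neg_one_mul, neg_neg, map_one]
    rw [dft_comp_neg, hdft]
    dsimp only
    rw [← neg_one_mul j, map_mul]
    linear_combination gaussSum χ stdAddChar * χ⁻¹ j * hsq
  rw [LFunction, ZMod.LFunction_one_sub _ hs hs', hdft_neg, hdft, LFunction_const_mul,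
    LFunction_const_mul]
  simp only [LFunction]
  ring

lemma IsPrimitive.norm_LFunction_one_sub_natCast {χ : DirichletCharacter ℂ N} (hχ : χ.IsPrimitive)
    {k : ℕ} (hk : 2 ≤ k) (hpar : χ (-1) = (-1) ^ k) :
    ‖χ.LFunction (1 - k)‖ = 2 * (N : ℝ) ^ ((k : ℝ) - 1 / 2) * (2 * π) ^ (-(k : ℝ)) *
      (k - 1).factorial * ‖χ⁻¹.LFunction k‖ := by
  have hs : ∀ n : ℕ, (k : ℂ) ≠ -n := by
    intro n h
    have hre := congrArg re h
    simp only [natCast_re, neg_re, Nat.cast_eq_neg_cast] at hre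
    omega
  have hs' : (k : ℂ) ≠ 1 := by exact_mod_cast (by omega : k ≠ 1)
  have hinv : χ⁻¹ (-1) = (-1) ^ k := by
    rw [MulChar.inv_apply_eq_inv', hpar, ← inv_pow, inv_neg, inv_one]
  have hexp : cexp (π * I * k / 2) = I ^ k := by
    rw [show (π * I * k / 2 : ℂ) = k * (π / 2 * I) by ring, exp_nat_mul, exp_pi_div_two_mul_I]
  have hexp_neg : cexp (-π * I * k / 2) = (-I) ^ k := by
    rw [show (-π * I * k / 2 : ℂ) = k * -(π / 2 * I) by ring, exp_nat_mul, exp_neg,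
      exp_pi_div_two_mul_I, inv_I]
  have hphase : ‖χ⁻¹ (-1) * cexp (π * I * k / 2) + cexp (-π * I * k / 2)‖ = 2 := by
    rw [hinv, hexp, hexp_neg, ← mul_pow, neg_one_mul, ← two_mul, norm_mul, norm_pow]
    simp
  have hGamma : Gamma k = (k - 1).factorial := by
    rw [← Nat.sub_add_cancel (by omega : 1 ≤ k), Nat.cast_add, Nat.cast_one, Gamma_nat_eq_factorial,
      Nat.add_sub_cancel]
  have hN : (0 : ℝ) < N := by exact_mod_cast Nat.pos_of_ne_zero (NeZero.ne N)
  have hsqrt : (N : ℝ) ^ ((k : ℝ) - 1 / 2) = N ^ ((k : ℝ) - 1) * √N := by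
    rw [Real.sqrt_eq_rpow, ← Real.rpow_add hN]
    ring_nf
  rw [hχ.LFunction_one_sub hs (Or.inr hs'), norm_mul, norm_mul, norm_mul, norm_mul, norm_mul,
    hphase, hχ.norm_gaussSum, hGamma, Complex.norm_natCast, norm_natCast_cpow_of_pos (NeZero.pos N),
    ← ofReal_ofNat, ← ofReal_mul, ← ofReal_natCast k, ← ofReal_neg,
    norm_cpow_eq_rpow_re_of_pos (by positivity), hsqrt]
  simp only [sub_re, one_re, ofReal_re]
  ring

lemma tendsto_LFunction_natCast_atTop (χ : DirichletCharacter ℂ N) :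
    Tendsto (fun k : ℕ ↦ χ.LFunction k) atTop (𝓝 1) := by
  have hLSeries : Tendsto (fun x : ℝ ↦ LSeries (χ ·) x) atTop (𝓝 1) := by
    simpa using LSeries.tendsto_atTop
      ((absicssaOfAbsConv_eq_one (NeZero.ne N) χ).trans_lt (EReal.coe_lt_top 1))
  refine (hLSeries.comp tendsto_natCast_atTop_atTop).congr' ?_
  filter_upwards [eventually_ge_atTop 2] with k hk
  have hre : 1 < (k : ℂ).re := by simp only [natCast_re]; exact_mod_cast hk
  simp [LFunction_eq_LSeries χ hre]

end DirichletCharacter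

end

section

open Real

lemma factorial_div_rpow_eq_stirlingSeq_div_sqrt_pi {x : ℝ} (hx : 0 < x) {k : ℕ} (hk : k ≠ 0) :
    2 * x ^ ((k : ℝ) - 1 / 2) * (2 * π) ^ (-(k : ℝ)) * (k - 1).factorial /
      (2 * exp (-(1 / 2)) * (k * x / (2 * π * exp 1)) ^ ((k : ℝ) - 1 / 2)) =
    Stirling.stirlingSeq k / √π := by
  have hk' : (0 : ℝ) < k := by exact_mod_cast Nat.pos_of_ne_zero hk
  have hpow (y : ℝ) (hy : 0 < y) : y ^ ((k : ℝ) - 1 / 2) = y ^ k / √y := by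
    rw [rpow_sub hy, rpow_natCast, sqrt_eq_rpow]
  have hfac : (k.factorial : ℝ) = k * (k - 1).factorial := by
    rw [← Nat.mul_factorial_pred hk, Nat.cast_mul]
  rw [div_rpow (by positivity) (by positivity), mul_rpow hk'.le hx.le, hpow x hx, hpow k hk',
    hpow _ (by positivity), rpow_neg (by positivity), rpow_natCast, exp_neg, exp_half,
    Stirling.stirlingSeq, hfac, div_pow, mul_pow, sqrt_mul (by positivity), sqrt_mul' _ hk'.le,
    sqrt_mul zero_le_two]
  field_simp
  rw [sq_sqrt hk'.le]
  ring

end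

/-- as `k → ∞` through positive integers with `χ(−1) = (−1)^k`,
`|L(χ,1−k)| / ( 2·e^{−1/2}·(kF/(2πe))^{k−1/2} ) → 1`. -/
theorem abs_LFunction_one_sub_asymptotic
    (F : ℕ) [NeZero F] (χ : DirichletCharacter ℂ F) (hχ : χ.IsPrimitive) :
    Tendsto
      (fun k : ℕ =>
        ‖χ.LFunction (1 - (k : ℂ))‖ /
          (2 * Real.exp (-(1 / 2)) *
            ((k * F) / (2 * Real.pi * Real.exp 1)) ^ ((k : ℝ) - 1 / 2)))
      (atTop ⊓ Filter.principal {k : ℕ | 1 ≤ k ∧ χ (-1) = (-1) ^ k})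
      (𝓝 1) := by
  have hStirling : Tendsto (fun k : ℕ ↦ Stirling.stirlingSeq k / √Real.pi) atTop (𝓝 1) := by
    simpa [div_self (by positivity : √Real.pi ≠ 0)] using
      Stirling.tendsto_stirlingSeq_sqrt_pi.div_const √Real.pi
  have hL : Tendsto (fun k : ℕ ↦ ‖χ⁻¹.LFunction k‖) atTop (𝓝 1) := by
    simpa using χ⁻¹.tendsto_LFunction_natCast_atTop.norm
  have hlim : Tendsto (fun k : ℕ ↦ Stirling.stirlingSeq k / √Real.pi * ‖χ⁻¹.LFunction k‖)
      atTop (𝓝 1) := by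
    simpa using hStirling.mul hL
  refine (hlim.mono_left inf_le_left).congr' ?_
  rw [EventuallyEq, eventually_inf_principal]
  filter_upwards [eventually_ge_atTop 2] with k hk hk_mem
  rw [hχ.norm_LFunction_one_sub_natCast hk hk_mem.2, mul_div_right_comm,
    factorial_div_rpow_eq_stirlingSeq_div_sqrt_pi (by exact_mod_cast (NeZero.pos F)) (by omega)]
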